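/- Let V be a finite vertex type and F a finite face type, with each face f assigned an edge set E_f such that every vertex incident to an edge of E_f is incident to exactly two edges of E_f, and assume the two-face condition and the single-shared-edge condition. If the union graph G on V with edge set E = ⋃_f E_f is connected and nonempty, and for every vertex v the link graph L_v is connected, then the Euler-transformed graph Ĝ admits an Eulerian circuit: a closed walk that traverses every edge of Ĝ exactly once. -/

import Mathlib

/-!
Every flag `(v, f)` has exactly four neighbours in `Ĝ`: the flags `(u, f)` for the two edges
`{v, u}` of `f` at `v`, and the flags `(v, g)` where `g` is the second face through one of these
two edges; the two such `g` differ by the single-shared-edge condition. `Ĝ` is connected, since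
the link graph at `v` connects the flags over `v` and each edge `{u, v} ∈ E_f` joins `(u, f)` to
`(v, f)`. So Euler's theorem applies. For it, take a longest trail: it is closed, because at its
start all incident edges are used while an open trail meets its start an odd number of times; and
it uses every edge, because otherwise connectivity gives an unused edge at one of its vertices,
and rotating the trail to that vertex and adding the edge makes it longer.
-/

open scoped Classical

noncomputable section

/-- A *flag* of a combinatorial polygonal complex: a pair `(v, f)` of a vertex and a face
such that `v` is incident to some edge of the edge set `E f` of the face `f`. -/
abbrev EulerFlag {V F : Type*} (E : F → Finset (Sym2 V)) : Type _ :=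
  {p : V × F // ∃ e ∈ E p.2, p.1 ∈ e}

/-- The adjacency relation of the Euler-transformed graph on flags:
`(u, f)` and `(v, f)` are related when `{u, v} ∈ E f`, and `(v, f)` and `(v, f')` are related
when `f ≠ f'` and some edge `e ∈ E f ∩ E f'` contains `v`. -/
def eulerRel {V F : Type*} (E : F → Finset (Sym2 V)) (p q : EulerFlag E) : Prop :=
  (p.val.2 = q.val.2 ∧ p.val.1 ≠ q.val.1 ∧ s(p.val.1, q.val.1) ∈ E p.val.2) ∨
    (p.val.1 = q.val.1 ∧ p.val.2 ≠ q.val.2 ∧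
      ∃ e, e ∈ E p.val.2 ∧ e ∈ E q.val.2 ∧ p.val.1 ∈ e)

/-- The Euler-transformed graph `Ĝ` on flags. -/
def eulerGraph {V F : Type*} (E : F → Finset (Sym2 V)) : SimpleGraph (EulerFlag E) :=
  SimpleGraph.fromRel (eulerRel E)

/-- The union graph `G` on `V` whose edge set is `E = ⋃ f, E f`. -/
def unionGraph {V F : Type*} (E : F → Finset (Sym2 V)) : SimpleGraph V :=
  SimpleGraph.fromEdgeSet {e : Sym2 V | ∃ f, e ∈ E f}

/-- The link graph `L_v`: the simple graph on the faces containing `v`, where `f` and `f'`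
are adjacent whenever `f ≠ f'` and some edge `e ∈ E f ∩ E f'` contains `v`. -/
def linkGraph {V F : Type*} (E : F → Finset (Sym2 V)) (v : V) :
    SimpleGraph {f : F // ∃ e ∈ E f, v ∈ e} :=
  SimpleGraph.fromRel (fun f f' => ∃ e, e ∈ E f.val ∧ e ∈ E f'.val ∧ v ∈ e)

namespace SimpleGraph

variable {V : Type*} {G : SimpleGraph V}

namespace Walk

theorem exists_mem_support_adj_notMem_edges (hG : G.Preconnected) {u w : V} (p : G.Walk u w)
    {e : Sym2 V} (he : e ∈ G.edgeSet) (hep : e ∉ p.edges) :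
    ∃ x ∈ p.support, ∃ y, G.Adj x y ∧ s(x, y) ∉ p.edges := by
  by_contra! hclosed
  have hsupport : ∀ {x z : V} (q : G.Walk x z), x ∈ p.support → z ∈ p.support := by
    intro x z q
    induction q with
    | nil => exact id
    | cons hxy _ ih => exact fun hx => ih (p.snd_mem_support_of_mem_edges (hclosed _ hx _ hxy))
  induction e using Sym2.ind with | _ a b =>
  obtain ⟨q⟩ := hG u a
  exact hep (hclosed a (hsupport q p.start_mem_support) b he)

theorem IsTrail.countP_edges_eq_degree [Fintype V] [DecidableEq V] [DecidableRel G.Adj]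
    {u w x : V} {p : G.Walk u w} (hp : p.IsTrail) (hx : ∀ y, G.Adj x y → s(x, y) ∈ p.edges) :
    p.edges.countP (x ∈ ·) = G.degree x := by
  rw [← card_incidenceFinset_eq_degree, List.countP_eq_length_filter,
    ← List.toFinset_card_of_nodup (hp.edges_nodup.filter _)]
  congr 1
  ext e
  simp only [List.mem_toFinset, List.mem_filter, decide_eq_true_eq, mem_incidenceFinset,
    incidenceSet]
  refine ⟨fun ⟨hep, hxe⟩ => ⟨p.edges_subset_edgeSet hep, hxe⟩, fun ⟨he, hxe⟩ => ⟨?_, hxe⟩⟩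
  obtain ⟨y, rfl⟩ := Sym2.mem_iff_exists.mp hxe
  exact hx y he

end Walk

variable (G) in
theorem exists_isTrail_forall_length_le [Fintype G.edgeSet] [Nonempty V] :
    ∃ (u w : V) (p : G.Walk u w), p.IsTrail ∧
      ∀ (u' w' : V) (q : G.Walk u' w'), q.IsTrail → q.length ≤ p.length := by
  let IsTrailLength n := ∃ (u w : V) (p : G.Walk u w), p.IsTrail ∧ p.length = n
  have hnil : IsTrailLength 0 := ⟨Classical.arbitrary V, _, .nil, .nil, rfl⟩
  obtain ⟨u, w, p, hp, hlen⟩ := Nat.findGreatest_spec (Nat.zero_le G.edgeFinset.card) hnil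
  refine ⟨u, w, p, hp, fun u' w' q hq => hlen ▸ Nat.le_findGreatest ?_ ⟨u', w', q, hq, rfl⟩⟩
  exact hq.length_le_card_edgeFinset

theorem Connected.exists_isEulerian_of_even_degree [Fintype V] [DecidableEq V]
    [DecidableRel G.Adj] (hG : G.Connected) (heven : ∀ x, Even (G.degree x)) :
    ∃ (x : V) (p : G.Walk x x), p.IsEulerian := by
  have := hG.nonempty
  obtain ⟨u, w, p, hp, hlongest⟩ := exists_isTrail_forall_length_le G
  have hsaturated : ∀ y, G.Adj u y → s(u, y) ∈ p.edges := by
    by_contra! ⟨y, huy, hyp⟩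
    have := hlongest _ _ (p.cons huy.symm) (hp.cons huy.symm (by rwa [Sym2.eq_swap]))
    rw [Walk.length_cons] at this
    omega
  obtain rfl : u = w := by
    by_contra huw
    have hodd := hp.even_countP_edges_iff u
    rw [hp.countP_edges_eq_degree hsaturated] at hodd
    exact (hodd.mp (heven u) huw).1 rfl
  refine ⟨u, p, hp.isEulerian_of_forall_mem fun e he => ?_⟩
  by_contra hep
  obtain ⟨x, hx, y, hxy, hxyp⟩ := p.exists_mem_support_adj_notMem_edges hG.preconnected he hep
  have := hlongest _ _ ((p.rotate x hx).cons hxy.symm)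
    ((hp.rotate hx).cons hxy.symm (by rwa [Sym2.eq_swap, (p.rotate_edges x hx).perm.mem_iff]))
  rw [Walk.length_cons, Walk.length_rotate] at this
  omega

end SimpleGraph

section EulerTransform

open SimpleGraph

variable {V F : Type*} (E : F → Finset (Sym2 V))

lemma eulerRel_symm {p q : EulerFlag E} (h : eulerRel E p q) : eulerRel E q p := by
  rcases h with ⟨hf, huv, he⟩ | ⟨hv, hfg, e, hef, heg, hve⟩
  · exact Or.inl ⟨hf.symm, huv.symm, by rwa [Sym2.eq_swap, ← hf]⟩
  · exact Or.inr ⟨hv.symm, hfg.symm, e, heg, hef, hv ▸ hve⟩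

lemma eulerGraph_adj {p q : EulerFlag E} : (eulerGraph E).Adj p q ↔ eulerRel E p q := by
  have hne : eulerRel E p q → p ≠ q := by
    rintro (⟨-, huv, -⟩ | ⟨-, hfg, -⟩) rfl <;> contradiction
  rw [eulerGraph, fromRel_adj]
  exact ⟨fun ⟨_, h⟩ => h.elim id (eulerRel_symm E), fun h => ⟨hne h, Or.inl h⟩⟩

def linkGraphHom (v : V) : linkGraph E v →g eulerGraph E where
  toFun f := ⟨(v, f.val), f.property⟩
  map_rel' {f g} h := by
    obtain ⟨hfg, ⟨e, he₁, he₂, hve⟩ | ⟨e, he₂, he₁, hve⟩⟩ := (fromRel_adj _ f g).mp h <;>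
      exact (eulerGraph_adj E).mpr (Or.inr ⟨rfl, fun h => hfg (Subtype.ext h), e, he₁, he₂, hve⟩)

lemma eulerGraph_reachable_of_fst_eq (hlink : ∀ v, (linkGraph E v).Preconnected)
    {p q : EulerFlag E} (h : p.val.1 = q.val.1) : (eulerGraph E).Reachable p q := by
  obtain ⟨⟨v, f⟩, hp⟩ := p
  obtain ⟨⟨w, g⟩, hq⟩ := q
  obtain rfl : v = w := h
  exact (hlink v ⟨f, hp⟩ ⟨g, hq⟩).map (linkGraphHom E v)

lemma eulerGraph_preconnected (hG : (unionGraph E).Preconnected)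
    (hlink : ∀ v, (linkGraph E v).Preconnected) : (eulerGraph E).Preconnected := by
  suffices h : ∀ {a b : V}, (unionGraph E).Walk a b →
      ∀ p q : EulerFlag E, p.val.1 = a → q.val.1 = b → (eulerGraph E).Reachable p q from
    fun p q => (hG p.val.1 q.val.1).elim fun W => h W p q rfl rfl
  intro a b W
  induction W with
  | nil => exact fun p q hp hq => eulerGraph_reachable_of_fst_eq E hlink (hp.trans hq.symm)
  | @cons a b c hab W ih =>
    intro p q hp hq
    obtain ⟨⟨f, hf⟩, hne⟩ := (fromEdgeSet_adj _).mp hab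
    let a' : EulerFlag E := ⟨(a, f), s(a, b), hf, Sym2.mem_mk_left a b⟩
    let b' : EulerFlag E := ⟨(b, f), s(a, b), hf, Sym2.mem_mk_right a b⟩
    have hadj : (eulerGraph E).Adj a' b' := (eulerGraph_adj E).mpr (Or.inl ⟨rfl, hne, hf⟩)
    exact (eulerGraph_reachable_of_fst_eq E hlink (q := a') hp).trans
      (hadj.reachable.trans (ih b' q rfl hq))

lemma card_filter_mk_mem_eq_two [Fintype V]
    (hloc : ∀ f v, (∃ e ∈ E f, v ∈ e) → ((E f).filter (fun e => v ∈ e)).card = 2)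
    {v : V} {f : F} (hp : ∃ e ∈ E f, v ∈ e) :
    (Finset.univ.filter (fun u => s(v, u) ∈ E f)).card = 2 := by
  rw [← hloc f v hp, ← Finset.card_image_of_injective _ (fun _ _ => Sym2.congr_right.mp)]
  congr 1
  ext e
  simp only [Finset.mem_image, Finset.mem_filter, Finset.mem_univ, true_and]
  constructor
  · rintro ⟨u, hu, rfl⟩
    exact ⟨hu, Sym2.mem_mk_left v u⟩
  · rintro ⟨he, hve⟩
    obtain ⟨u, rfl⟩ := Sym2.mem_iff_exists.mp hve
    exact ⟨u, he, rfl⟩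

lemma card_filter_faces_sharing_edge_at_eq_two [Fintype F]
    (hloc : ∀ f v, (∃ e ∈ E f, v ∈ e) → ((E f).filter (fun e => v ∈ e)).card = 2)
    (htwo : ∀ e : Sym2 V, (∃ f, e ∈ E f) →
      (Finset.univ.filter (fun f => e ∈ E f)).card = 2)
    (hshare : ∀ f f' : F, f ≠ f' → ((E f) ∩ (E f')).card ≤ 1)
    {v : V} {f : F} (hp : ∃ e ∈ E f, v ∈ e) :
    (Finset.univ.filter (fun g => g ≠ f ∧ ∃ e ∈ E f, e ∈ E g ∧ v ∈ e)).card = 2 := by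
  have hbiUnion : Finset.univ.filter (fun g => g ≠ f ∧ ∃ e ∈ E f, e ∈ E g ∧ v ∈ e) =
      ((E f).filter (v ∈ ·)).biUnion fun e => (Finset.univ.filter (e ∈ E ·)).erase f := by
    ext g
    simp only [Finset.mem_filter, Finset.mem_univ, true_and, Finset.mem_biUnion,
      Finset.mem_erase]
    constructor
    · rintro ⟨hgf, e, hef, heg, hve⟩
      exact ⟨e, ⟨hef, hve⟩, hgf, heg⟩
    · rintro ⟨e, ⟨hef, hve⟩, hgf, heg⟩
      exact ⟨hgf, e, hef, heg, hve⟩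
  have hdisj : ((E f).filter (v ∈ ·) : Set (Sym2 V)).PairwiseDisjoint
      fun e => (Finset.univ.filter (e ∈ E ·)).erase f := by
    intro e₁ he₁ e₂ he₂ hne
    refine Finset.disjoint_left.mpr fun g hg₁ hg₂ => hne ?_
    simp only [Finset.mem_erase, Finset.mem_filter, Finset.mem_univ, true_and] at hg₁ hg₂
    simp only [Finset.coe_filter, Set.mem_ofPred_eq] at he₁ he₂
    exact Finset.card_le_one.mp (hshare f g (Ne.symm hg₁.1)) e₁
      (Finset.mem_inter.mpr ⟨he₁.1, hg₁.2⟩) e₂ (Finset.mem_inter.mpr ⟨he₂.1, hg₂.2⟩)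
  rw [hbiUnion, Finset.card_biUnion hdisj, ← hloc f v hp, Finset.card_eq_sum_ones]
  refine Finset.sum_congr rfl fun e he => ?_
  have hef : e ∈ E f := (Finset.mem_filter.mp he).1
  rw [Finset.card_erase_of_mem (by simpa using hef), htwo e ⟨f, hef⟩]

lemma map_neighborFinset_eulerGraph [Fintype V] [Fintype F]
    (hnd : ∀ f, ∀ e ∈ E f, ¬ e.IsDiag) {v : V} {f : F} (hp : ∃ e ∈ E f, v ∈ e) :
    ((eulerGraph E).neighborFinset ⟨(v, f), hp⟩).map (Function.Embedding.subtype _) =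
      Finset.univ.filter (fun u => s(v, u) ∈ E f) ×ˢ {f} ∪
        {v} ×ˢ Finset.univ.filter (fun g => g ≠ f ∧ ∃ e ∈ E f, e ∈ E g ∧ v ∈ e) := by
  ext ⟨u, g⟩
  simp only [Finset.mem_map, mem_neighborFinset, eulerGraph_adj, eulerRel, Finset.mem_union,
    Finset.mem_product, Finset.mem_filter, Finset.mem_univ, true_and, Finset.mem_singleton,
    Function.Embedding.coe_subtype, Subtype.exists, exists_and_right, exists_eq_right]
  constructor
  · rintro ⟨-, ⟨rfl, -, he⟩ | ⟨rfl, hfg, he⟩⟩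
    exacts [Or.inl ⟨he, rfl⟩, Or.inr ⟨rfl, Ne.symm hfg, he⟩]
  · rintro (⟨he, rfl⟩ | ⟨rfl, hgf, e, hef, heg, hue⟩)
    · have hvu : v ≠ u := fun h => hnd g _ he (Sym2.mk_isDiag_iff.mpr h)
      exact ⟨⟨_, he, Sym2.mem_mk_right v u⟩, Or.inl ⟨rfl, hvu, he⟩⟩
    · exact ⟨⟨e, heg, hue⟩, Or.inr ⟨rfl, Ne.symm hgf, e, hef, heg, hue⟩⟩

lemma degree_eulerGraph [Fintype V] [Fintype F]
    (hnd : ∀ f, ∀ e ∈ E f, ¬ e.IsDiag)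
    (hloc : ∀ f v, (∃ e ∈ E f, v ∈ e) → ((E f).filter (fun e => v ∈ e)).card = 2)
    (htwo : ∀ e : Sym2 V, (∃ f, e ∈ E f) →
      (Finset.univ.filter (fun f => e ∈ E f)).card = 2)
    (hshare : ∀ f f' : F, f ≠ f' → ((E f) ∩ (E f')).card ≤ 1)
    (p : EulerFlag E) : (eulerGraph E).degree p = 4 := by
  obtain ⟨⟨v, f⟩, hp⟩ := p
  have hdisj : Disjoint (Finset.univ.filter (fun u => s(v, u) ∈ E f) ×ˢ {f})
      ({v} ×ˢ Finset.univ.filter (fun g => g ≠ f ∧ ∃ e ∈ E f, e ∈ E g ∧ v ∈ e)) := by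
    simp +contextual [Finset.disjoint_left]
  rw [← card_neighborFinset_eq_degree, ← Finset.card_map (Function.Embedding.subtype _),
    map_neighborFinset_eulerGraph E hnd hp, Finset.card_union_of_disjoint hdisj,
    Finset.card_product, Finset.card_product, card_filter_mk_mem_eq_two E hloc hp,
    card_filter_faces_sharing_edge_at_eq_two E hloc htwo hshare hp]
  rfl

end EulerTransform

/-- If the union graph is connected and nonempty and all link graphs are connected, then
the Euler-transformed graph admits an Eulerian circuit. -/
theorem euler_transform_eulerian_circuit {V F : Type*} [Fintype V] [Fintype F]
    (E : F → Finset (Sym2 V))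
    (hnd : ∀ f, ∀ e ∈ E f, ¬ e.IsDiag)
    (hloc : ∀ f v, (∃ e ∈ E f, v ∈ e) → ((E f).filter (fun e => v ∈ e)).card = 2)
    (htwo : ∀ e : Sym2 V, (∃ f, e ∈ E f) →
      (Finset.univ.filter (fun f => e ∈ E f)).card = 2)
    (hshare : ∀ f f' : F, f ≠ f' → ((E f) ∩ (E f')).card ≤ 1)
    (hGconn : (unionGraph E).Connected)
    (hne : ∃ f, (E f).Nonempty)
    (hlink : ∀ v : V, (linkGraph E v).Connected) :
    ∃ (x : EulerFlag E) (w : (eulerGraph E).Walk x x), w.IsEulerian := by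
  obtain ⟨f, e, he⟩ := hne
  have : Nonempty (EulerFlag E) := ⟨⟨(e.out.1, f), e, he, e.out_fst_mem⟩⟩
  have hconn : (eulerGraph E).Connected :=
    ⟨eulerGraph_preconnected E hGconn.preconnected fun v => (hlink v).preconnected⟩
  refine hconn.exists_isEulerian_of_even_degree fun p => ?_
  rw [degree_eulerGraph E hnd hloc htwo hshare p]
  exact even_two_mul 2
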